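/- arXiv:1809.04355 — 7 statements merged into one kernel-verified Lean document; each statement's English description precedes it below -/
import Mathlib

section
/- Let S be a finite set of sporadic tasks partitioned into S₁ and S₂, where every τᵢ = (Cᵢ, Tᵢ, Dᵢ) in S₁ has Dᵢ = 1 < Tᵢ, every τᵢ in S₂ has Dᵢ = Tᵢ = H, and H is a common positive integer multiple of all Tᵢ for τᵢ ∈ S₁ (each Tᵢ rational). If Σ_{τᵢ∈S₁} Cᵢ ≤ 1 and Σ_{τᵢ∈S} Cᵢ/Tᵢ ≤ 1, then for every t with 0 ≤ t ≤ H, Σ_{τᵢ∈S} dbf(τᵢ, t) ≤ t. -/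
/-- Demand bound function of a sporadic task (C, T, D) at time t. -/
noncomputable def dbf (C T D t : ℝ) : ℝ := ((max 0 (⌊(t - D) / T⌋ + 1) : ℤ) : ℝ) * C

/-!
Before the common deadline `H` of the tasks in `S₂` they contribute no demand. The tasks of
`S₁` demand nothing before their deadline `1`, and afterwards each demands at most
`C + (t - 1) · C / T`; summing, `Σ C ≤ 1` and `Σ C / T ≤ 1` give
demand `≤ t`. At `t = H`, a multiple of every period, each task has exactly `H / T` jobs
due, so the demand is `H · Σ C / T ≤ H`.
-/

open Finset

theorem dbf_eq_zero_of_lt {C T D t : ℝ} (hT : 0 < T) (ht : t < D) : dbf C T D t = 0 := by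
  have hfloor : ⌊(t - D) / T⌋ < 0 :=
    Int.floor_lt.mpr (by exact_mod_cast div_neg_of_neg_of_pos (sub_neg.mpr ht) hT)
  simp [dbf, max_eq_left (by omega : ⌊(t - D) / T⌋ + 1 ≤ 0)]

theorem dbf_le_add_mul_div {C T D t : ℝ} (hC : 0 ≤ C) (hT : 0 < T) (ht : D ≤ t) :
    dbf C T D t ≤ C + (t - D) * (C / T) := by
  have hjobs : ((max 0 (⌊(t - D) / T⌋ + 1) : ℤ) : ℝ) ≤ (t - D) / T + 1 := by
    push_cast
    exact max_le (by positivity) (by linarith [Int.floor_le ((t - D) / T)])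
  calc dbf C T D t ≤ ((t - D) / T + 1) * C := mul_le_mul_of_nonneg_right hjobs hC
    _ = C + (t - D) * (C / T) := by ring

theorem dbf_natCast_mul_period {C T D : ℝ} (hD : 0 < D) (hDT : D ≤ T) (k : ℕ) :
    dbf C T D (k * T) = k * T * (C / T) := by
  have hT : 0 < T := hD.trans_le hDT
  have hfloor : ⌊(k * T - D) / T⌋ = (k : ℤ) - 1 := by
    have hDT' : D / T ≤ 1 := (div_le_one hT).mpr hDT
    have hD' : 0 < D / T := div_pos hD hT
    rw [Int.floor_eq_iff, sub_div, mul_div_cancel_right₀ _ hT.ne']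
    push_cast
    constructor <;> linarith
  rw [dbf, hfloor, sub_add_cancel, max_eq_right (by positivity)]
  field_simp
  push_cast
  ring

theorem sum_dbf_le_of_common_deadline {ι : Type*} (s : Finset ι) (C T D : ι → ℝ) {d t : ℝ}
    (hC : ∀ i ∈ s, 0 ≤ C i) (hT : ∀ i ∈ s, 0 < T i) (hD : ∀ i ∈ s, D i = d)
    (hcost : ∑ i ∈ s, C i ≤ d) (hutil : ∑ i ∈ s, C i / T i ≤ 1) (ht : 0 ≤ t) :
    ∑ i ∈ s, dbf (C i) (T i) (D i) t ≤ t := by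
  rcases lt_or_ge t d with htd | hdt
  · rw [sum_eq_zero fun i hi => dbf_eq_zero_of_lt (hT i hi) (hD i hi ▸ htd)]
    exact ht
  calc ∑ i ∈ s, dbf (C i) (T i) (D i) t
      ≤ ∑ i ∈ s, (C i + (t - d) * (C i / T i)) := sum_le_sum fun i hi =>
        hD i hi ▸ dbf_le_add_mul_div (hC i hi) (hT i hi) (hD i hi ▸ hdt)
    _ = ∑ i ∈ s, C i + (t - d) * ∑ i ∈ s, C i / T i := by rw [sum_add_distrib, mul_sum]
    _ ≤ d + (t - d) * 1 := by gcongr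
    _ = t := by ring

theorem demand_le_on_interval_general {ι : Type*} [DecidableEq ι] (S S₁ S₂ : Finset ι)
    (C T D : ι → ℝ) (H : ℝ)
    (hpart : S₁ ∪ S₂ = S) (hdisj : Disjoint S₁ S₂)
    (hpos : ∀ i ∈ S, 0 < C i ∧ 0 < T i ∧ 0 < D i)
    (hS₁ : ∀ i ∈ S₁, D i = 1 ∧ 1 < T i)
    (hS₂ : ∀ i ∈ S₂, D i = H ∧ T i = H)
    (hmul : ∀ i ∈ S₁, ∃ k : ℕ, 1 ≤ k ∧ H = k * T i)
    (hdens : ∑ i ∈ S₁, C i ≤ 1)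
    (hutil : ∑ i ∈ S, C i / T i ≤ 1) :
    ∀ t : ℝ, 0 ≤ t → t ≤ H → ∑ i ∈ S, dbf (C i) (T i) (D i) t ≤ t := by
  subst hpart
  have hS₁pos : ∀ i ∈ S₁, 0 < C i ∧ 0 < T i ∧ 0 < D i := fun i hi => hpos i (mem_union_left _ hi)
  have hS₂pos : ∀ i ∈ S₂, 0 < C i ∧ 0 < T i ∧ 0 < D i := fun i hi => hpos i (mem_union_right _ hi)
  intro t ht htH
  rcases htH.lt_or_eq with htH | rfl
  · have hS₂idle : ∑ i ∈ S₂, dbf (C i) (T i) (D i) t = 0 :=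
      sum_eq_zero fun i hi => dbf_eq_zero_of_lt (hS₂pos i hi).2.1 ((hS₂ i hi).1 ▸ htH)
    have hutil₁ : ∑ i ∈ S₁, C i / T i ≤ 1 := le_trans (sum_le_sum_of_subset_of_nonneg
      subset_union_left fun i hi _ => (div_pos (hpos i hi).1 (hpos i hi).2.1).le) hutil
    rw [sum_union hdisj, hS₂idle, add_zero]
    exact sum_dbf_le_of_common_deadline S₁ C T D (fun i hi => (hS₁pos i hi).1.le)
      (fun i hi => (hS₁pos i hi).2.1) (fun i hi => (hS₁ i hi).1) hdens hutil₁ ht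
  · have hexact : ∀ i ∈ S₁ ∪ S₂, dbf (C i) (T i) (D i) t = t * (C i / T i) := by
      intro i hi
      rcases mem_union.mp hi with hi | hi
      · obtain ⟨k, -, rfl⟩ := hmul i hi
        exact dbf_natCast_mul_period (hS₁pos i hi).2.2 ((hS₁ i hi).1 ▸ (hS₁ i hi).2.le) k
      · obtain ⟨hD, hT⟩ := hS₂ i hi
        simpa [hT] using dbf_natCast_mul_period (C := C i) (hS₂pos i hi).2.2 (hD.trans hT.symm).le 1
    rw [sum_congr rfl hexact, ← mul_sum]
    exact mul_le_of_le_one_right ht hutil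

theorem demand_le_on_interval {ι : Type*} [DecidableEq ι] (S S₁ S₂ : Finset ι)
    (C T D : ι → ℝ) (H : ℝ)
    (hpart : S₁ ∪ S₂ = S) (hdisj : Disjoint S₁ S₂)
    (hpos : ∀ i ∈ S, 0 < C i ∧ 0 < T i ∧ 0 < D i)
    (hS₁ : ∀ i ∈ S₁, D i = 1 ∧ 1 < T i)
    (hS₂ : ∀ i ∈ S₂, D i = H ∧ T i = H)
    (hT₁rat : ∀ i ∈ S₁, ∃ q : ℚ, (T i : ℝ) = (q : ℝ))
    (hmul : ∀ i ∈ S₁, ∃ k : ℕ, 1 ≤ k ∧ H = k * T i)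
    (hHpos : 0 < H)
    (hdens : ∑ i ∈ S₁, C i ≤ 1)
    (hutil : ∑ i ∈ S, C i / T i ≤ 1) :
    ∀ t : ℝ, 0 ≤ t → t ≤ H → ∑ i ∈ S, dbf (C i) (T i) (D i) t ≤ t :=
  demand_le_on_interval_general S S₁ S₂ C T D H hpart hdisj hpos hS₁ hS₂ hmul hdens hutil
end

section
/- Let N = 2K with integer K ≥ 4 and H ≫ K^K. Define tasks τ₁ = (C₁=1/K, T₁=H, D₁=1); for even i = 2,4,…,2K, τᵢ = (Cᵢ = K^{i/2−2}, Tᵢ = Dᵢ = K^{i/2−1}); and for odd i = 3,5,…,2K−1, τᵢ = (Cᵢ = K^{(i−1)/2} − K^{(i−1)/2−1}, Tᵢ = H, Dᵢ = K^{(i−1)/2}). Then the subset of odd-indexed tasks satisfies Σ dbf(τᵢ, t) ≤ t for all t ≥ 0, and the subset of even-indexed tasks satisfies Σ Cᵢ/Tᵢ ≤ 1 (hence is EDF-feasible on one processor). -/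
/-- Execution time of task i in the task set of Theorem 2. -/
noncomputable def Cbf (K : ℕ) (i : ℕ) : ℝ :=
  if i = 1 then 1 / K
  else if i % 2 = 0 then (K : ℝ) ^ ((i : ℤ) / 2 - 2)
  else (K : ℝ) ^ (((i : ℤ) - 1) / 2) - (K : ℝ) ^ (((i : ℤ) - 1) / 2 - 1)

/-- Relative deadline of task i in the task set of Theorem 2. -/
noncomputable def Dbf (K : ℕ) (i : ℕ) : ℝ :=
  if i = 1 then 1
  else if i % 2 = 0 then (K : ℝ) ^ ((i : ℤ) / 2 - 1)
  else (K : ℝ) ^ (((i : ℤ) - 1) / 2)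

/-- Period of task i in the task set of Theorem 2 (H for odd i, = deadline for even i). -/
noncomputable def Tbf (K : ℕ) (H : ℝ) (i : ℕ) : ℝ :=
  if i % 2 = 0 then Dbf K i else H

open Finset

lemma dbf_le {C T D t : ℝ} (hC : 0 ≤ C) (hT : 0 < T) (hD : 0 ≤ D) (ht : 0 ≤ t) :
    dbf C T D t ≤ ⌊t / T⌋ * C + if D ≤ t then C else 0 := by
  have hq : (0 : ℤ) ≤ ⌊t / T⌋ := Int.floor_nonneg.2 (by positivity)
  unfold dbf
  split_ifs with h
  · have hfloor : ⌊(t - D) / T⌋ ≤ ⌊t / T⌋ := Int.floor_le_floor (by gcongr; linarith)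
    have hmax : max 0 (⌊(t - D) / T⌋ + 1) ≤ ⌊t / T⌋ + 1 := max_le (by omega) (by omega)
    rw [← add_one_mul]
    gcongr
    exact_mod_cast hmax
  · have hneg : ⌊(t - D) / T⌋ < 0 :=
      Int.floor_lt.2 (by push_cast; exact div_neg_of_neg_of_pos (by linarith) hT)
    rw [max_eq_left (by omega), add_zero, Int.cast_zero, zero_mul]
    exact mul_nonneg (Int.cast_nonneg hq) hC

/-- With `q = ⌊t / T⌋ ≥ 1` the demand is at most `(q + 1) S ≤ 2 q S ≤ q T ≤ t`;
for `t < T` only first jobs count. -/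
lemma sum_dbf_le_of_common_period {ι : Type*} (s : Finset ι) (C D : ι → ℝ) {T t : ℝ}
    (hC : ∀ i ∈ s, 0 ≤ C i) (hD : ∀ i ∈ s, 0 ≤ D i) (hT : 0 < T) (ht : 0 ≤ t)
    (hfirst : ∑ i ∈ s with D i ≤ t, C i ≤ t) (hS : 2 * ∑ i ∈ s, C i ≤ T) :
    ∑ i ∈ s, dbf (C i) T (D i) t ≤ t := by
  set q : ℤ := ⌊t / T⌋
  have hqT : q * T ≤ t := (le_div_iff₀ hT).1 (Int.floor_le _)
  have hfirst_le : ∑ i ∈ s with D i ≤ t, C i ≤ ∑ i ∈ s, C i :=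
    sum_le_sum_of_subset_of_nonneg (filter_subset _ _) fun i hi _ => hC i hi
  calc ∑ i ∈ s, dbf (C i) T (D i) t
      ≤ ∑ i ∈ s, (q * C i + if D i ≤ t then C i else 0) :=
        sum_le_sum fun i hi => dbf_le (hC i hi) hT (hD i hi) ht
    _ = q * ∑ i ∈ s, C i + ∑ i ∈ s with D i ≤ t, C i := by
        rw [sum_add_distrib, mul_sum, sum_filter]
    _ ≤ t := by
        rcases (Int.floor_nonneg.2 (by positivity : 0 ≤ t / T)).eq_or_lt with hq0 | hq1
        · simpa [q, ← hq0] using hfirst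
        · have hq1 : (1 : ℝ) ≤ q := by exact_mod_cast hq1
          nlinarith [sum_nonneg hC]

lemma sum_filter_le_of_sum_range_succ_le {c D : ℕ → ℝ} (hc : ∀ j, 0 ≤ c j)
    (hpartial : ∀ m, ∑ j ∈ range (m + 1), c j ≤ D m) (n : ℕ) {t : ℝ} (ht : 0 ≤ t) :
    ∑ j ∈ range n with D j ≤ t, c j ≤ t := by
  rcases (filter (D · ≤ t) (range n)).eq_empty_or_nonempty with hempty | hne
  · simpa [hempty] using ht
  · obtain ⟨-, hDm⟩ := mem_filter.1 (max'_mem _ hne)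
    calc ∑ j ∈ range n with D j ≤ t, c j
        ≤ ∑ j ∈ range (_ + 1), c j :=
          sum_le_sum_of_subset_of_nonneg
            (fun j hj => mem_range_succ_iff.2 (le_max' _ j hj)) fun j _ _ => hc j
      _ ≤ t := (hpartial _).trans hDm

lemma filter_odd_Icc_one_two_mul (n : ℕ) :
    {i ∈ Icc 1 (2 * n) | i % 2 = 1} = (range n).image (fun j => 2 * j + 1) := by
  ext i
  simp only [mem_filter, mem_Icc, mem_image, mem_range]
  exact ⟨fun _ => ⟨i / 2, by omega, by omega⟩, by rintro ⟨j, hj, rfl⟩; omega⟩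

lemma filter_even_Icc_one_two_mul (n : ℕ) :
    {i ∈ Icc 1 (2 * n) | i % 2 = 0} = (Icc 1 n).image (fun j => 2 * j) := by
  ext i
  simp only [mem_filter, mem_Icc, mem_image]
  exact ⟨fun _ => ⟨i / 2, by omega, by omega⟩, by rintro ⟨j, hj, rfl⟩; omega⟩

section TaskSet

variable (K : ℕ)

lemma Cbf_one : Cbf K 1 = 1 / K := by simp [Cbf]

lemma Cbf_two_mul_succ_add_one (j : ℕ) :
    Cbf K (2 * (j + 1) + 1) = (K : ℝ) ^ (j + 1) - (K : ℝ) ^ j := by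
  have he : (((2 * (j + 1) + 1 : ℕ) : ℤ) - 1) / 2 = ((j + 1 : ℕ) : ℤ) := by push_cast; omega
  have he' : ((j + 1 : ℕ) : ℤ) - 1 = (j : ℕ) := by push_cast; ring
  rw [Cbf, if_neg (by omega), if_neg (by omega), he, he', zpow_natCast, zpow_natCast]

lemma Dbf_two_mul_add_one (j : ℕ) : Dbf K (2 * j + 1) = (K : ℝ) ^ j := by
  have he : (((2 * j + 1 : ℕ) : ℤ) - 1) / 2 = (j : ℕ) := by push_cast; omega
  rcases j with _ | j
  · simp [Dbf]
  · rw [Dbf, if_neg (by omega), if_neg (by omega), he, zpow_natCast]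

lemma Tbf_two_mul_add_one (H : ℝ) (j : ℕ) : Tbf K H (2 * j + 1) = H := by
  simp [Tbf, Nat.add_mod]

lemma Cbf_div_Tbf_two_mul (hK : K ≠ 0) (j : ℕ) (H : ℝ) :
    Cbf K (2 * j) / Tbf K H (2 * j) = (K : ℝ)⁻¹ := by
  have he : ((2 * j : ℕ) : ℤ) / 2 = (j : ℤ) := by push_cast; omega
  rw [Cbf, Tbf, Dbf, if_neg (by omega), if_pos (by omega), if_pos (by omega), if_neg (by omega),
    if_pos (by omega), he, ← zpow_sub₀ (Nat.cast_ne_zero.2 hK),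
    show (j : ℤ) - 2 - (j - 1) = -1 by ring, zpow_neg_one]

variable {K}

lemma Cbf_two_mul_add_one_nonneg (hK : 1 ≤ K) (j : ℕ) : 0 ≤ Cbf K (2 * j + 1) := by
  have hK : (1 : ℝ) ≤ K := by exact_mod_cast hK
  rcases j with _ | j
  · rw [Cbf_one]; positivity
  · rw [Cbf_two_mul_succ_add_one]
    exact sub_nonneg.2 (pow_le_pow_right₀ hK j.le_succ)

lemma sum_range_succ_Cbf_two_mul_add_one_le (hK : 1 ≤ K) (m : ℕ) :
    ∑ j ∈ range (m + 1), Cbf K (2 * j + 1) ≤ (K : ℝ) ^ m := by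
  induction m with
  | zero => simpa [Cbf_one] using inv_le_one_of_one_le₀ (by exact_mod_cast hK : (1 : ℝ) ≤ K)
  | succ m ih =>
    rw [sum_range_succ, Cbf_two_mul_succ_add_one]
    linarith

lemma two_mul_sum_range_Cbf_two_mul_add_one_le (hK : 2 ≤ K) :
    2 * ∑ j ∈ range K, Cbf K (2 * j + 1) ≤ (K : ℝ) ^ K := by
  have hK1 : 1 ≤ K := by omega
  have hsum := sum_range_succ_Cbf_two_mul_add_one_le hK1 (K - 1)
  rw [Nat.sub_add_cancel hK1] at hsum
  calc 2 * ∑ j ∈ range K, Cbf K (2 * j + 1) ≤ K * (K : ℝ) ^ (K - 1) :=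
        mul_le_mul (by exact_mod_cast hK) hsum
          (sum_nonneg fun j _ => Cbf_two_mul_add_one_nonneg hK1 j) (by positivity)
    _ = (K : ℝ) ^ K := by rw [← pow_succ', Nat.sub_add_cancel hK1]

end TaskSet

theorem best_fit_instance_two_processors (K : ℕ) (hK : 4 ≤ K) (H : ℝ)
    (hH : (K : ℝ) ^ K < H) :
    (∀ t : ℝ, 0 ≤ t →
      ∑ i ∈ (Finset.Icc 1 (2 * K)).filter (fun i => i % 2 = 1),
        dbf (Cbf K i) (Tbf K H i) (Dbf K i) t ≤ t) ∧
    ∑ i ∈ (Finset.Icc 1 (2 * K)).filter (fun i => i % 2 = 0),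
        Cbf K i / Tbf K H i ≤ 1 := by
  have hK1 : 1 ≤ K := by omega
  have hH0 : 0 < H := hH.trans_le' (by positivity)
  refine ⟨fun t ht => ?_, ?_⟩
  · rw [filter_odd_Icc_one_two_mul, sum_image fun _ _ _ _ h => by omega]
    simp only [Tbf_two_mul_add_one, Dbf_two_mul_add_one]
    exact sum_dbf_le_of_common_period _ _ _ (fun j _ => Cbf_two_mul_add_one_nonneg hK1 j)
      (fun j _ => by positivity) hH0 ht
      (sum_filter_le_of_sum_range_succ_le (Cbf_two_mul_add_one_nonneg hK1)
        (sum_range_succ_Cbf_two_mul_add_one_le hK1) K ht)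
      ((two_mul_sum_range_Cbf_two_mul_add_one_le (by omega)).trans hH.le)
  · rw [filter_even_Icc_one_two_mul, sum_image fun _ _ _ _ h => by omega,
      sum_congr rfl fun j _ => Cbf_div_Tbf_two_mul K (by omega) j H]
    simp [mul_inv_cancel₀ (show (K : ℝ) ≠ 0 by positivity)]
end

section
/- For the task set of Theorem 2 (K ≥ 4 an integer, H > K^K, tasks as defined there, indexed in deadline-monotonic order), the deadline-monotonic partitioning algorithm with the best-fit strategy and the schedulability tests C_i + Σ_{τ_j ∈ T_m} dbf*(τ_j, D_i) ≤ D_i and u_i + Σ_{τ_j ∈ T_m} u_j ≤ 1 assigns task τᵢ to processor ⌈i/2⌉, and hence uses K = N/2 processors. -/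
/-- Approximate demand bound function of a sporadic task (C, T, D) at time t. -/
noncomputable def dbfStar (C T D t : ℝ) : ℝ :=
  if t < D then 0 else ((t - D) / T + 1) * C

/-- The claimed best-fit assignment: task i is assigned to processor ⌈i/2⌉. -/
def assign (i : ℕ) : ℕ := (i + 1) / 2

/-- Approximate demand on processor m at time `Dbf K i` from tasks 1..i-1 assigned by
`assign`, i.e. the load considered when task i is being placed. -/
noncomputable def load (K : ℕ) (H : ℝ) (m i : ℕ) : ℝ :=
  ∑ j ∈ (Finset.Icc 1 (i - 1)).filter (fun j => assign j = m),
    dbfStar (Cbf K j) (Tbf K H j) (Dbf K j) (Dbf K i)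

/-- Utilization of processor m from tasks 1..i-1 assigned by `assign`. -/
noncomputable def utilLoad (K : ℕ) (H : ℝ) (m i : ℕ) : ℝ :=
  ∑ j ∈ (Finset.Icc 1 (i - 1)).filter (fun j => assign j = m),
    Cbf K j / Tbf K H j

/-- Both schedulability tests (approximate demand bound and utilization bound) pass when
task i is tentatively placed on processor m. -/
noncomputable def feasible (K : ℕ) (H : ℝ) (m i : ℕ) : Prop :=
  Cbf K i + load K H m i ≤ Dbf K i ∧
  Cbf K i / Tbf K H i + utilLoad K H m i ≤ 1

/-!
Processor `m` receives the odd task `2m - 1` and the even task `2m`, which share the deadline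
`K^(m-1)`. An even task `2k` fits on processor `k` on top of task `2k - 1`, and on an earlier
processor `m < k` the approximate demand at `K^(k-1)` is at most `2 K^(m-1) + K^(k-2) ≤ 3 K^(k-2)`,
which for `K ≥ 4` does not exceed the demand `K^(k-1) - K^(k-2)` of task `2k - 1` on processor
`k`: best fit picks processor `k`. An odd task `2n - 1` has execution time `K^(n-1) - K^(n-2)`,
but every earlier processor already carries demand more than `K^(n-2)` at its deadline `K^(n-1)`
through its even task, so a new processor is opened. The utilization test never interferes,
since `H > K^K` keeps the utilization of every odd task below `1/K`.
-/

lemma dbfStar_of_le {C T D t : ℝ} (h : D ≤ t) : dbfStar C T D t = ((t - D) / T + 1) * C := by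
  rw [dbfStar, if_neg (not_lt.mpr h)]

lemma dbfStar_self (C T D : ℝ) : dbfStar C T D D = C := by
  simp [dbfStar_of_le le_rfl]

lemma dbfStar_of_period_eq_deadline {C D t : ℝ} (hD : 0 < D) (h : D ≤ t) :
    dbfStar C D D t = t / D * C := by
  rw [dbfStar_of_le h, sub_div, div_self hD.ne', sub_add_cancel]

lemma le_dbfStar {C T D t : ℝ} (hC : 0 ≤ C) (hT : 0 ≤ T) (h : D ≤ t) : C ≤ dbfStar C T D t := by
  rw [dbfStar_of_le h]
  have : 0 ≤ (t - D) / T := div_nonneg (sub_nonneg.mpr h) hT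
  nlinarith

lemma dbfStar_le_two_mul {C T D t : ℝ} (hC : 0 ≤ C) (hT : 0 < T) (h : D ≤ t) (hT' : t - D ≤ T) :
    dbfStar C T D t ≤ 2 * C := by
  rw [dbfStar_of_le h]
  have : (t - D) / T ≤ 1 := (div_le_one hT).mpr hT'
  nlinarith

section TaskParameters

variable (K : ℕ) (H : ℝ) {m : ℕ}

lemma Cbf_two_mul : Cbf K (2 * m) = (K : ℝ) ^ ((m : ℤ) - 2) := by
  rw [Cbf, if_neg (by omega), if_pos (by omega)]
  congr 1
  omega

lemma Dbf_two_mul : Dbf K (2 * m) = (K : ℝ) ^ ((m : ℤ) - 1) := by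
  rw [Dbf, if_neg (by omega), if_pos (by omega)]
  congr 1
  omega

lemma Tbf_two_mul : Tbf K H (2 * m) = Dbf K (2 * m) := by
  rw [Tbf, if_pos (by omega)]

lemma Tbf_two_mul_sub_one (hm : 1 ≤ m) : Tbf K H (2 * m - 1) = H := by
  rw [Tbf, if_neg (by omega)]

lemma Dbf_two_mul_sub_one (hm : 1 ≤ m) : Dbf K (2 * m - 1) = Dbf K (2 * m) := by
  rw [Dbf_two_mul, Dbf]
  obtain rfl | hm := eq_or_lt_of_le hm
  · simp
  · rw [if_neg (by omega), if_neg (by omega)]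
    congr 1
    omega

lemma Cbf_two_mul_sub_one (hm : 2 ≤ m) :
    Cbf K (2 * m - 1) = (K : ℝ) ^ ((m : ℤ) - 1) - (K : ℝ) ^ ((m : ℤ) - 2) := by
  rw [Cbf, if_neg (by omega), if_neg (by omega)]
  congr 2 <;> omega

end TaskParameters

section Processors

variable {K : ℕ} {H : ℝ} {m k : ℕ}

lemma Cbf_two_mul_sub_one_pos (hK : 2 ≤ K) (hm : 1 ≤ m) : 0 < Cbf K (2 * m - 1) := by
  have hK' : (1 : ℝ) < K := by exact_mod_cast hK
  obtain rfl | hm := eq_or_lt_of_le hm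
  · simpa [Cbf] using zero_lt_one.trans hK'
  · rw [Cbf_two_mul_sub_one K hm, sub_pos]
    exact zpow_lt_zpow_right₀ hK' (by omega)

lemma Cbf_two_mul_sub_one_le (hK : 2 ≤ K) (hm : 1 ≤ m) :
    Cbf K (2 * m - 1) ≤ (K : ℝ) ^ ((m : ℤ) - 1) - (K : ℝ) ^ ((m : ℤ) - 2) := by
  obtain rfl | hm := eq_or_lt_of_le hm
  · have hK' : (2 : ℝ) ≤ K := by exact_mod_cast hK
    have hKinv : (K : ℝ)⁻¹ ≤ 1 / 2 := by
      rw [inv_eq_one_div]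
      gcongr
    have hC : Cbf K (2 * 1 - 1) = (K : ℝ)⁻¹ := by simp [Cbf]
    rw [hC, Nat.cast_one, sub_self, zpow_zero, show (1 : ℤ) - 2 = -1 by norm_num, zpow_neg_one]
    linarith
  · exact (Cbf_two_mul_sub_one K hm).le

lemma Dbf_two_mul_pos (hK : 1 ≤ K) (n : ℕ) : 0 < Dbf K (2 * n) := by
  rw [Dbf_two_mul]
  exact zpow_pos (by exact_mod_cast hK) _

lemma Dbf_two_mul_le (hK : 1 ≤ K) (h : m ≤ k) : Dbf K (2 * m) ≤ Dbf K (2 * k) := by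
  rw [Dbf_two_mul, Dbf_two_mul]
  exact zpow_le_zpow_right₀ (by exact_mod_cast hK) (by omega)

lemma mul_Dbf_two_mul_lt (hK : 1 ≤ K) (hH : (K : ℝ) ^ K < H) (hk : k ≤ K) :
    K * Dbf K (2 * k) < H := by
  have hK' : (1 : ℝ) ≤ K := by exact_mod_cast hK
  calc (K : ℝ) * Dbf K (2 * k) = (K : ℝ) ^ k := by
        rw [Dbf_two_mul, zpow_sub_one₀ (by positivity), zpow_natCast, mul_comm,
          mul_assoc, inv_mul_cancel₀ (by positivity), mul_one]
    _ ≤ (K : ℝ) ^ K := pow_le_pow_right₀ hK' hk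
    _ < H := hH

lemma assign_two_mul : assign (2 * k) = k := by
  simp only [assign]
  omega

lemma filter_assign_eq_pair (hm : 1 ≤ m) {n : ℕ} (h : 2 * m ≤ n) :
    (Finset.Icc 1 n).filter (fun j => assign j = m) = {2 * m - 1, 2 * m} := by
  ext j
  rw [Finset.mem_filter]
  simp only [Finset.mem_Icc, Finset.mem_insert, Finset.mem_singleton, assign]
  omega

lemma filter_assign_eq_singleton (hm : 1 ≤ m) :
    (Finset.Icc 1 (2 * m - 1)).filter (fun j => assign j = m) = {2 * m - 1} := by
  ext j
  rw [Finset.mem_filter]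
  simp only [Finset.mem_Icc, Finset.mem_singleton, assign]
  omega

lemma load_two_mul_self (hk : 1 ≤ k) : load K H k (2 * k) = Cbf K (2 * k - 1) := by
  rw [load, filter_assign_eq_singleton hk, Finset.sum_singleton, Dbf_two_mul_sub_one K hk,
    dbfStar_self]

lemma utilLoad_two_mul_self (hk : 1 ≤ k) : utilLoad K H k (2 * k) = Cbf K (2 * k - 1) / H := by
  rw [utilLoad, filter_assign_eq_singleton hk, Finset.sum_singleton, Tbf_two_mul_sub_one K H hk]

lemma load_of_two_mul_lt (hm : 1 ≤ m) {i : ℕ} (h : 2 * m < i) :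
    load K H m i =
      dbfStar (Cbf K (2 * m - 1)) (Tbf K H (2 * m - 1)) (Dbf K (2 * m - 1)) (Dbf K i) +
      dbfStar (Cbf K (2 * m)) (Tbf K H (2 * m)) (Dbf K (2 * m)) (Dbf K i) := by
  rw [load, filter_assign_eq_pair hm (by omega), Finset.sum_pair (by omega)]

lemma dbfStar_two_mul_Dbf (hK : 1 ≤ K) (h : m ≤ k) :
    dbfStar (Cbf K (2 * m)) (Tbf K H (2 * m)) (Dbf K (2 * m)) (Dbf K (2 * k)) =
      (K : ℝ) ^ ((k : ℤ) - 2) := by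
  have hK0 : (K : ℝ) ≠ 0 := by positivity
  rw [Tbf_two_mul, dbfStar_of_period_eq_deadline (Dbf_two_mul_pos hK m) (Dbf_two_mul_le hK h),
    Dbf_two_mul, Dbf_two_mul, Cbf_two_mul, ← zpow_sub₀ hK0, ← zpow_add₀ hK0]
  congr 1
  ring

lemma dbfStar_two_mul_sub_one_Dbf_le (hK : 2 ≤ K) (hm : 1 ≤ m) (h : m ≤ k)
    (hH : Dbf K (2 * k) ≤ H) :
    dbfStar (Cbf K (2 * m - 1)) (Tbf K H (2 * m - 1)) (Dbf K (2 * m - 1)) (Dbf K (2 * k)) ≤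
      2 * Cbf K (2 * m - 1) := by
  have hD := Dbf_two_mul_pos (K := K) (by omega) m
  rw [Tbf_two_mul_sub_one K H hm, Dbf_two_mul_sub_one K hm]
  exact dbfStar_le_two_mul (Cbf_two_mul_sub_one_pos hK hm).le
    (hD.trans_le ((Dbf_two_mul_le (by omega) h).trans hH)) (Dbf_two_mul_le (by omega) h)
    (by linarith)

lemma Cbf_le_dbfStar_two_mul_sub_one_Dbf (hK : 2 ≤ K) (hH : 0 ≤ H) (hm : 1 ≤ m) (h : m ≤ k) :
    Cbf K (2 * m - 1) ≤
      dbfStar (Cbf K (2 * m - 1)) (Tbf K H (2 * m - 1)) (Dbf K (2 * m - 1)) (Dbf K (2 * k)) := by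
  rw [Tbf_two_mul_sub_one K H hm, Dbf_two_mul_sub_one K hm]
  exact le_dbfStar (Cbf_two_mul_sub_one_pos hK hm).le hH (Dbf_two_mul_le (by omega) h)

lemma feasible_two_mul_self (hK : 2 ≤ K) (hH : (K : ℝ) ^ K < H) (hk : 1 ≤ k) (hkK : k ≤ K) :
    feasible K H k (2 * k) := by
  have hK' : (2 : ℝ) ≤ K := by exact_mod_cast hK
  have hC := Cbf_two_mul_sub_one_le hK hk
  have hK2 : (0 : ℝ) < (K : ℝ) ^ ((k : ℤ) - 2) := zpow_pos (by positivity) _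
  constructor
  · rw [load_two_mul_self hk, Cbf_two_mul, Dbf_two_mul]
    linarith
  · have hHK := mul_Dbf_two_mul_lt (by omega) hH hkK
    have hH0 : 0 < H := (mul_pos (by positivity) (Dbf_two_mul_pos (by omega) k)).trans hHK
    have hCD : Cbf K (2 * k - 1) ≤ Dbf K (2 * k) := by
      rw [Dbf_two_mul]
      linarith
    have hutil_odd : Cbf K (2 * k - 1) / H ≤ (K : ℝ)⁻¹ := by
      rw [div_le_iff₀ hH0, inv_mul_eq_div, le_div_iff₀ (by positivity)]
      nlinarith
    have hutil_even : Cbf K (2 * k) / Tbf K H (2 * k) = (K : ℝ)⁻¹ := by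
      rw [Tbf_two_mul, Cbf_two_mul, Dbf_two_mul, ← zpow_sub₀ (by positivity), ← zpow_neg_one]
      congr 1
      ring
    have hKinv : (K : ℝ)⁻¹ ≤ 1 / 2 := by
      rw [inv_eq_one_div]
      gcongr
    rw [utilLoad_two_mul_self hk, hutil_even]
    linarith

lemma load_le_load_two_mul_self (hK : 4 ≤ K) (hH : (K : ℝ) ^ K < H) (hm : 1 ≤ m) (hmk : m ≤ k)
    (hkK : k ≤ K) : load K H m (2 * k) ≤ load K H k (2 * k) := by
  obtain rfl | hmk := eq_or_lt_of_le hmk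
  · rfl
  have hK' : (4 : ℝ) ≤ K := by exact_mod_cast hK
  have hpow : (0 : ℝ) < (K : ℝ) ^ ((k : ℤ) - 2) := zpow_pos (by positivity) _
  have hDH : Dbf K (2 * k) ≤ H :=
    (le_mul_of_one_le_left (Dbf_two_mul_pos (by omega) k).le (by linarith)).trans
      (mul_Dbf_two_mul_lt (by omega) hH hkK).le
  have hodd := dbfStar_two_mul_sub_one_Dbf_le (by omega) hm hmk.le hDH
  have hCm : Cbf K (2 * m - 1) ≤ (K : ℝ) ^ ((k : ℤ) - 2) := by
    have := Cbf_two_mul_sub_one_le (K := K) (by omega) hm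
    have : (K : ℝ) ^ ((m : ℤ) - 1) ≤ (K : ℝ) ^ ((k : ℤ) - 2) :=
      zpow_le_zpow_right₀ (by linarith) (by omega)
    linarith [zpow_pos (by positivity : (0 : ℝ) < K) ((m : ℤ) - 2)]
  have hself : (K : ℝ) ^ ((k : ℤ) - 1) = K * (K : ℝ) ^ ((k : ℤ) - 2) := by
    rw [show (k : ℤ) - 1 = (k : ℤ) - 2 + 1 by ring, zpow_add_one₀ (by positivity), mul_comm]
  have hfour : 4 * (K : ℝ) ^ ((k : ℤ) - 2) ≤ K * (K : ℝ) ^ ((k : ℤ) - 2) :=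
    mul_le_mul_of_nonneg_right hK' hpow.le
  rw [load_of_two_mul_lt hm (by omega), dbfStar_two_mul_Dbf (by omega) hmk.le,
    load_two_mul_self (by omega), Cbf_two_mul_sub_one K (m := k) (by omega), hself]
  linarith

lemma not_feasible_two_mul_sub_one (hK : 2 ≤ K) (hH : 0 ≤ H) (hm : 1 ≤ m) (hmk : m < k) :
    ¬ feasible K H m (2 * k - 1) := by
  rintro ⟨hdemand, -⟩
  have hodd := Cbf_le_dbfStar_two_mul_sub_one_Dbf hK hH hm hmk.le
  have hCm := Cbf_two_mul_sub_one_pos hK hm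
  rw [load_of_two_mul_lt hm (by omega), Dbf_two_mul_sub_one K (m := k) (by omega),
    dbfStar_two_mul_Dbf (by omega) hmk.le, Cbf_two_mul_sub_one K (m := k) (by omega),
    Dbf_two_mul] at hdemand
  rw [Dbf_two_mul] at hodd
  linarith

end Processors

lemma image_assign_Icc (K : ℕ) : (Finset.Icc 1 (2 * K)).image assign = Finset.Icc 1 K := by
  ext n
  simp only [Finset.mem_image, Finset.mem_Icc, assign]
  constructor
  · rintro ⟨j, hj, rfl⟩
    omega
  · rintro hn
    exact ⟨2 * n, by omega, by omega⟩

theorem best_fit_uses_K_processors (K : ℕ) (hK : 4 ≤ K) (H : ℝ)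
    (hH : (K : ℝ) ^ K < H) :
    -- even-indexed tasks join processor i/2 = ⌈i/2⌉, which is feasible and has
    -- maximal load among the feasible processors opened so far (best fit)
    (∀ i, 2 ≤ i → i ≤ 2 * K → i % 2 = 0 →
      assign i ≤ i / 2 ∧ feasible K H (assign i) i ∧
      (∀ m, 1 ≤ m → m ≤ i / 2 → feasible K H m i → load K H m i ≤ load K H (assign i) i)) ∧
    -- odd-indexed tasks (i ≥ 3) fit on no processor opened so far,
    -- so a new processor assign i = i/2 + 1 is opened
    (∀ i, 2 ≤ i → i ≤ 2 * K → i % 2 = 1 →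
      (∀ m, 1 ≤ m → m ≤ i / 2 → ¬ feasible K H m i) ∧ assign i = i / 2 + 1) ∧
    -- hence exactly the processors 1, …, K are used
    (Finset.Icc 1 (2 * K)).image assign = Finset.Icc 1 K := by
  have hH0 : 0 ≤ H := le_trans (by positivity) hH.le
  refine ⟨?_, ?_, image_assign_Icc K⟩
  · intro i hi2 hiK hi
    obtain ⟨k, rfl⟩ : ∃ k, i = 2 * k := ⟨i / 2, by omega⟩
    rw [assign_two_mul]
    exact ⟨by omega, feasible_two_mul_self (by omega) hH (by omega) (by omega),
      fun m hm hmk _ => load_le_load_two_mul_self hK hH hm (by omega) (by omega)⟩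
  · intro i hi2 hiK hi
    obtain ⟨k, rfl⟩ : ∃ k, i = 2 * k - 1 := ⟨i / 2 + 1, by omega⟩
    exact ⟨fun m hm hmk => not_feasible_two_mul_sub_one (by omega) hH0 hm (by omega),
      by simp only [assign]; omega⟩
end

section
/- Fix 0 < ε < 1 and N ≥ 1. Define tasks τ₁ = (C₁=1, T₁=(1+ε)^{N−2}/ε^{N−1}, D₁=1) and, for 2 ≤ i ≤ N, τᵢ with Dᵢ = Cᵢ = (1+ε)^{i−2}/ε^{i−1} and Tᵢ = (1+ε)^{N−2}/ε^{N−1}. Then for all t ≥ 0, Σ_{i=1}^{N} dbf(τᵢ, t) ≤ (1+ε)·t. -/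
/-- Relative deadline (= execution time) of task i in the instance of Theorem 4. -/
noncomputable def Dsp (ε : ℝ) (i : ℕ) : ℝ :=
  if i = 1 then 1 else (1 + ε) ^ (i - 2) / ε ^ (i - 1)

/-- Common period of all tasks in the instance of Theorem 4. -/
noncomputable def Tsp (ε : ℝ) (N : ℕ) : ℝ := (1 + ε) ^ (N - 2) / ε ^ (N - 1)

/-!
The deadlines satisfy `ε · D_{M+1} = D_1 + ⋯ + D_M`; hence, as `ε ≤ 1`, they increase up to the
common period `T = D_N`, and `D_1 + ⋯ + D_M ≤ (1 + ε) · D_M` for every `M`.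
Writing `t = m T + r` with `0 ≤ r < T`, each task demands `m · D_i` from the complete periods
plus `D_i` if `D_i ≤ r`. The first part sums to at most `m (1 + ε) T`; in the second, if `M` is the
last index with `D_M ≤ r`, the sum is at most `D_1 + ⋯ + D_M ≤ (1 + ε) D_M ≤ (1 + ε) r`.
-/

open Finset

section CommonPeriod

variable {D : ℕ → ℝ} {s : ℝ}

theorem dbf_self_natCast_mul_add {C T r : ℝ} (m : ℕ) (hT : 0 < T) (hC₀ : 0 ≤ C) (hCT : C ≤ T)
    (hr₀ : 0 ≤ r) (hrT : r < T) :
    dbf C T C (m * T + r) = m * C + if C ≤ r then C else 0 := by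
  have hfloor : ⌊(m * T + r - C) / T⌋ = ⌊(r - C) / T⌋ + m := by
    rw [← Int.floor_add_intCast]
    congr 1
    field_simp
    push_cast
    ring
  unfold dbf
  split_ifs with hCr
  · have h : ⌊(r - C) / T⌋ = 0 := by
      rw [Int.floor_eq_zero_iff]
      constructor
      · exact div_nonneg (by linarith) hT.le
      · rw [div_lt_one hT]; linarith
    rw [hfloor, h, max_eq_right (by omega)]
    push_cast
    ring
  · have h : ⌊(r - C) / T⌋ = -1 := by
      rw [Int.floor_eq_iff]
      push_cast
      constructor
      · rw [le_div_iff₀ hT]; linarith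
      · rw [neg_add_cancel]; exact div_neg_of_neg_of_pos (by linarith) hT
    rw [hfloor, h, max_eq_right (by omega)]
    push_cast
    ring

theorem sum_ite_le_mul_of_sum_le (N : ℕ) {r : ℝ} (hD₀ : ∀ i, 0 ≤ D i) (hs₀ : 0 ≤ s)
    (hr₀ : 0 ≤ r) (hsum : ∀ M ≤ N, ∑ i ∈ Icc 1 M, D i ≤ s * D M) :
    ∑ i ∈ Icc 1 N, (if D i ≤ r then D i else 0) ≤ s * r := by
  induction N with
  | zero => simpa using mul_nonneg hs₀ hr₀
  | succ n ih =>
    by_cases hlast : D (n + 1) ≤ r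
    · calc ∑ i ∈ Icc 1 (n + 1), (if D i ≤ r then D i else 0)
          ≤ ∑ i ∈ Icc 1 (n + 1), D i :=
            sum_le_sum fun i _ => by split_ifs <;> simp [hD₀ i]
        _ ≤ s * D (n + 1) := hsum (n + 1) le_rfl
        _ ≤ s * r := mul_le_mul_of_nonneg_left hlast hs₀
    · rw [sum_Icc_succ_top (by omega), if_neg hlast, add_zero]
      exact ih fun M hM => hsum M (by omega)

theorem sum_dbf_le_of_sum_le (N : ℕ) {T t : ℝ} (hT : 0 < T) (hD₀ : ∀ i, 0 ≤ D i)
    (hDT : ∀ i ≤ N, D i ≤ T) (hs₀ : 0 ≤ s) (hsum : ∀ M ≤ N, ∑ i ∈ Icc 1 M, D i ≤ s * D M)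
    (ht : 0 ≤ t) :
    ∑ i ∈ Icc 1 N, dbf (D i) T (D i) t ≤ s * t := by
  set m := ⌊t / T⌋₊
  set r := t - m * T
  have hmT : m * T ≤ t := (le_div_iff₀ hT).mp (Nat.floor_le (div_nonneg ht hT.le))
  have htT : t < (m + 1) * T := (div_lt_iff₀ hT).mp (Nat.lt_floor_add_one _)
  have ht_eq : t = m * T + r := by ring
  have hdbf : ∀ i ∈ Icc 1 N, dbf (D i) T (D i) t = m * D i + if D i ≤ r then D i else 0 :=
    fun i hi => by
      rw [ht_eq]
      exact dbf_self_natCast_mul_add m hT (hD₀ i) (hDT i (mem_Icc.mp hi).2) (by linarith)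
        (by linarith)
  have hperiods : ∑ i ∈ Icc 1 N, D i ≤ s * T :=
    (hsum N le_rfl).trans (mul_le_mul_of_nonneg_left (hDT N le_rfl) hs₀)
  rw [sum_congr rfl hdbf, sum_add_distrib, ← mul_sum]
  calc (m : ℝ) * ∑ i ∈ Icc 1 N, D i + ∑ i ∈ Icc 1 N, (if D i ≤ r then D i else 0)
      ≤ m * (s * T) + s * r :=
        add_le_add (mul_le_mul_of_nonneg_left hperiods m.cast_nonneg)
          (sum_ite_le_mul_of_sum_le N hD₀ hs₀ (by linarith) hsum)
    _ = s * t := by rw [ht_eq]; ring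

end CommonPeriod

section Instance

variable {ε : ℝ}

theorem Tsp_eq_Dsp (ε : ℝ) (N : ℕ) : Tsp ε N = Dsp ε N := by
  unfold Tsp Dsp
  split_ifs with hN
  · simp [hN]
  · rfl

theorem Dsp_nonneg (hε : 0 ≤ ε) (i : ℕ) : 0 ≤ Dsp ε i := by
  unfold Dsp
  split_ifs <;> positivity

theorem Dsp_add_two (ε : ℝ) (n : ℕ) : Dsp ε (n + 2) = (1 + ε) ^ n / ε ^ (n + 1) := by
  simp [Dsp]

theorem sum_Icc_Dsp (hε : ε ≠ 0) {M : ℕ} (hM : 1 ≤ M) :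
    ∑ i ∈ Icc 1 M, Dsp ε i = ε * Dsp ε (M + 1) := by
  induction M, hM using Nat.le_induction with
  | base => simp [Dsp, hε]
  | succ n hn ih =>
    obtain ⟨k, rfl⟩ := Nat.exists_eq_add_of_le' hn
    rw [sum_Icc_succ_top (by omega), ih, Dsp_add_two, Dsp_add_two]
    field_simp
    ring

theorem sum_Icc_Dsp_le_mul (hε : 0 < ε) (M : ℕ) :
    ∑ i ∈ Icc 1 M, Dsp ε i ≤ (1 + ε) * Dsp ε M := by
  match M with
  | 0 => simp [Dsp]; linarith
  | 1 => simpa [Dsp] using hε.le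
  | n + 2 =>
    rw [sum_Icc_succ_top (by omega), sum_Icc_Dsp hε.ne' (by omega)]
    exact (by ring : ε * Dsp ε (n + 2) + Dsp ε (n + 2) = (1 + ε) * Dsp ε (n + 2)).le

theorem Dsp_monotone (hε₀ : 0 < ε) (hε₁ : ε ≤ 1) : Monotone (Dsp ε) := by
  refine monotone_nat_of_le_succ fun n => ?_
  rcases Nat.eq_zero_or_pos n with rfl | hn
  · simp [Dsp]
  · calc Dsp ε n ≤ ∑ i ∈ Icc 1 n, Dsp ε i :=
          single_le_sum (fun i _ => Dsp_nonneg hε₀.le i) (mem_Icc.mpr ⟨hn, le_rfl⟩)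
      _ = ε * Dsp ε (n + 1) := sum_Icc_Dsp hε₀.ne' hn
      _ ≤ Dsp ε (n + 1) := mul_le_of_le_one_left (Dsp_nonneg hε₀.le _) hε₁

end Instance

theorem speedup_instance_feasible_on_one_fast_processor_general
    (ε : ℝ) (hε₀ : 0 < ε) (hε₁ : ε < 1) (N : ℕ) :
    ∀ t : ℝ, 0 ≤ t →
      ∑ i ∈ Finset.Icc 1 N, dbf (Dsp ε i) (Tsp ε N) (Dsp ε i) t ≤ (1 + ε) * t := by
  intro t ht
  have hT : 0 < Tsp ε N := by unfold Tsp; positivity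
  rw [Tsp_eq_Dsp] at hT ⊢
  exact sum_dbf_le_of_sum_le N hT (Dsp_nonneg hε₀.le) (fun i hi => Dsp_monotone hε₀ hε₁.le hi)
    (by linarith) (fun M _ => sum_Icc_Dsp_le_mul hε₀ M) ht

theorem speedup_instance_feasible_on_one_fast_processor
    (ε : ℝ) (hε₀ : 0 < ε) (hε₁ : ε < 1) (N : ℕ) (hN : 1 ≤ N) :
    ∀ t : ℝ, 0 ≤ t →
      ∑ i ∈ Finset.Icc 1 N, dbf (Dsp ε i) (Tsp ε N) (Dsp ε i) t ≤ (1 + ε) * t :=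
  speedup_instance_feasible_on_one_fast_processor_general ε hε₀ hε₁ N
end

section
/- Fix 0 < ε < 1 and N ≥ 2, with tasks as in Theorem 4 (τ₁ = (1, (1+ε)^{N−2}/ε^{N−1}, 1); τᵢ = ((1+ε)^{i−2}/ε^{i−1}, (1+ε)^{N−2}/ε^{N−1}, (1+ε)^{i−2}/ε^{i−1}) for 2 ≤ i ≤ N). For any two distinct indices i ≠ j, the two-task set {τᵢ, τⱼ} violates the EDF demand condition: there exists t ≥ 0 with dbf(τᵢ, t) + dbf(τⱼ, t) > t. Hence any feasible partition assigns each task to its own processor and uses N processors. -/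
lemma Dsp_pos {ε : ℝ} (hε : 0 < ε) (i : ℕ) : 0 < Dsp ε i := by
  unfold Dsp
  split
  · norm_num
  · exact div_pos (pow_pos (by linarith) _) (pow_pos hε _)

lemma dbf_lb {C T D t : ℝ} (hT : 0 < T) (hC : 0 ≤ C) (hDt : D ≤ t) :
    C ≤ dbf C T D t := by
  have h0 : (0 : ℝ) ≤ (t - D) / T := div_nonneg (by linarith) hT.le
  have hfl : (0 : ℤ) ≤ ⌊(t - D) / T⌋ := Int.floor_nonneg.2 h0
  have h1 : (1 : ℤ) ≤ max 0 (⌊(t - D) / T⌋ + 1) := le_max_of_le_right (by omega)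
  have : (1 : ℝ) ≤ ((max 0 (⌊(t - D) / T⌋ + 1) : ℤ) : ℝ) := by exact_mod_cast h1
  calc C = 1 * C := (one_mul C).symm
    _ ≤ _ := mul_le_mul_of_nonneg_right this hC

theorem speedup_instance_no_two_tasks_together
    (ε : ℝ) (hε₀ : 0 < ε) (hε₁ : ε < 1) (N : ℕ) (hN : 2 ≤ N) :
    ∀ i ∈ Finset.Icc 1 N, ∀ j ∈ Finset.Icc 1 N, i ≠ j →
      ∃ t : ℝ, 0 ≤ t ∧
        dbf (Dsp ε i) (Tsp ε N) (Dsp ε i) t + dbf (Dsp ε j) (Tsp ε N) (Dsp ε j) t > t := by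
  intro i _ j _ _
  have hT : 0 < Tsp ε N := div_pos (pow_pos (by linarith) _) (pow_pos hε₀ _)
  have hi := Dsp_pos hε₀ i
  have hj := Dsp_pos hε₀ j
  refine ⟨max (Dsp ε i) (Dsp ε j), le_max_of_le_left hi.le, ?_⟩
  have h1 := dbf_lb (C := Dsp ε i) (t := max (Dsp ε i) (Dsp ε j)) hT hi.le (le_max_left _ _)
  have h2 := dbf_lb (C := Dsp ε j) (t := max (Dsp ε i) (Dsp ε j)) hT hj.le (le_max_right _ _)
  rcases max_cases (Dsp ε i) (Dsp ε j) with ⟨h, _⟩ | ⟨h, _⟩ <;> linarith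
end

section
/- For tasks τ_j with D_j ≤ T_j and D_j ≤ t, the approximate demand bound function satisfies dbf(τ_j, t) ≤ dbf*(τ_j, t) ≤ 2·dbf(τ_j, t), where dbf*(τ_j, t) = ((t − D_j)/T_j + 1)·C_j. -/
theorem dbf_le_dbfStar_le_two_dbf (C T D t : ℝ) (hC : 0 < C) (hT : 0 < T) (hD : 0 < D)
    (hDT : D ≤ T) (ht : D ≤ t) :
    dbf C T D t ≤ dbfStar C T D t ∧ dbfStar C T D t ≤ 2 * dbf C T D t := by
  have hx : (0:ℝ) ≤ (t - D) / T := div_nonneg (by linarith) hT.le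
  have hfl : (0:ℤ) ≤ ⌊(t - D) / T⌋ := Int.floor_nonneg.mpr hx
  have hmax : max 0 (⌊(t - D) / T⌋ + 1) = ⌊(t - D) / T⌋ + 1 :=
    max_eq_right (by omega)
  unfold dbf dbfStar
  rw [if_neg (not_lt.mpr ht), hmax]
  push_cast
  constructor
  · have := Int.floor_le ((t - D) / T)
    nlinarith
  · have h1 : (t - D) / T < ⌊(t - D) / T⌋ + 1 := Int.lt_floor_add_one _
    have h2 : (0:ℝ) ≤ (⌊(t - D) / T⌋ : ℝ) := by exact_mod_cast hfl
    nlinarith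
end

section
/- Suppose there exists a polynomial-time algorithm A for the multiprocessor partitioned packing problem with approximation factor 2 − ε for some ε > 0 (i.e., A always returns a feasible partition on at most (2 − ε)·M* processors, where M* is the optimum). Then A decides uniprocessor EDF feasibility: A returns a one-processor partition if and only if the task set is EDF-feasible on one processor. -/
/-- A set of tasks is EDF-feasible on one processor iff its total demand never exceeds t. -/
def EDFFeasible {ι : Type*} (S : Finset ι) (C T D : ι → ℝ) : Prop :=
  ∀ t : ℝ, 0 ≤ t → ∑ i ∈ S, dbf (C i) (T i) (D i) t ≤ t

/-- The task set admits a feasible partition on M processors. -/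
def FeasibleOn {ι : Type*} [Fintype ι] [DecidableEq ι] (C T D : ι → ℝ) (M : ℕ) : Prop :=
  ∃ p : ι → Fin M, ∀ m : Fin M,
    EDFFeasible (Finset.univ.filter (fun i => p i = m)) C T D

theorem FeasibleOn.pos {ι : Type*} [Fintype ι] [DecidableEq ι] [Nonempty ι] {C T D : ι → ℝ}
    {M : ℕ} (h : FeasibleOn C T D M) : 0 < M := by
  obtain ⟨p, -⟩ := h
  exact Fin.pos (p (Classical.arbitrary ι))

theorem Nat.le_one_of_cast_le_two_sub {a : ℕ} {ε : ℝ} (hε : 0 < ε) (h : (a : ℝ) ≤ 2 - ε) :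
    a ≤ 1 := by
  have : (a : ℝ) < 2 := by linarith
  exact Nat.lt_succ_iff.mp (by exact_mod_cast this)

theorem approx_algorithm_decides_feasibility {ι : Type*} [Fintype ι] [DecidableEq ι]
    [Nonempty ι] (C T D : ι → ℝ) (ε : ℝ) (hε : 0 < ε)
    (a : ℕ)  -- the number of processors used by algorithm 𝒜
    (ha_feas : FeasibleOn C T D a)  -- 𝒜 outputs a feasible partition
    (ha_approx : ∀ M : ℕ, FeasibleOn C T D M → (a : ℝ) ≤ (2 - ε) * M) :
    a = 1 ↔ FeasibleOn C T D 1 := by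
  refine ⟨fun ha => ha ▸ ha_feas, fun h_one => ?_⟩
  have ha_le : a ≤ 1 :=
    Nat.le_one_of_cast_le_two_sub hε (by simpa using ha_approx 1 h_one)
  have ha_pos : 0 < a := ha_feas.pos
  omega
end
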